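/- arXiv:1011.5967 — 7 statements merged into one kernel-verified Lean document; each statement's English description precedes it below -/
import Mathlib

section
/- Let T > 0, let f : [0,T) → [0,∞) be a function of class C¹, let φ : [0,T) → [0,∞) be continuous, and let a ≥ 0 be a constant. If f'(t) ≤ −φ(t)·√(f(t))·(√(f(t)) − a) for every t ∈ [0,T), then f(t) ≤ max{f(0), a²} for every t ∈ [0,T). -/
open Real

/-- Comparison lemma (Lemma 3.1(1)): if `f' ≤ -φ √f (√f - a)` on `[0,T)` then
`f ≤ max {f(0), a²}` on `[0,T)`. -/
theorem ode_comparison_sqrt (T : ℝ) (hT : 0 < T) (f f' φ : ℝ → ℝ) (a : ℝ) (ha : 0 ≤ a)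
    (hf_nn : ∀ t ∈ Set.Ico (0:ℝ) T, 0 ≤ f t)
    (hf_deriv : ∀ t ∈ Set.Ico (0:ℝ) T, HasDerivWithinAt f (f' t) (Set.Ico 0 T) t)
    (hf'_cont : ContinuousOn f' (Set.Ico 0 T))
    (hφ_cont : ContinuousOn φ (Set.Ico 0 T))
    (hφ_nn : ∀ t ∈ Set.Ico (0:ℝ) T, 0 ≤ φ t)
    (hineq : ∀ t ∈ Set.Ico (0:ℝ) T,
      f' t ≤ -φ t * Real.sqrt (f t) * (Real.sqrt (f t) - a)) :
    ∀ t ∈ Set.Ico (0:ℝ) T, f t ≤ max (f 0) (a ^ 2) := by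
  intro t₀ ht₀
  by_contra hcon
  push_neg at hcon
  set M := max (f 0) (a ^ 2) with hMdef
  have hfc : ContinuousOn f (Set.Ico 0 T) := fun t ht => (hf_deriv t ht).continuousWithinAt
  obtain ⟨ht₀0, ht₀T⟩ := ht₀
  have hsub : Set.Icc (0:ℝ) t₀ ⊆ Set.Ico 0 T := fun x hx => ⟨hx.1, lt_of_le_of_lt hx.2 ht₀T⟩
  set S := Set.Icc (0:ℝ) t₀ ∩ f ⁻¹' Set.Iic M with hSdef
  have hS0 : (0:ℝ) ∈ S := ⟨⟨le_refl 0, ht₀0⟩, Set.mem_preimage.2 (Set.mem_Iic.2 (le_max_left _ _))⟩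
  have hSne : S.Nonempty := ⟨0, hS0⟩
  have hSbdd : BddAbove S := ⟨t₀, fun x hx => hx.1.2⟩
  have hSclosed : IsClosed S :=
    (hfc.mono hsub).preimage_isClosed_of_isClosed isClosed_Icc isClosed_Iic
  set s := sSup S with hsdef
  have hsS : s ∈ S := hSclosed.csSup_mem hSne hSbdd
  have hfs : f s ≤ M := Set.mem_Iic.1 (Set.mem_preimage.1 hsS.2)
  have hs0 : 0 ≤ s := hsS.1.1
  have hst₀ : s < t₀ := lt_of_le_of_ne hsS.1.2 (fun h => absurd hfs (by rw [h]; exact not_le.2 hcon))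
  -- on (s, t₀], f > M
  have hgt : ∀ t ∈ Set.Ioc s t₀, M < f t := by
    intro t ht
    by_contra h
    push_neg at h
    have : t ∈ S := ⟨⟨le_trans hs0 ht.1.le, ht.2⟩, Set.mem_preimage.2 (Set.mem_Iic.2 h)⟩
    exact absurd (le_csSup hSbdd this) (not_le.2 ht.1)
  -- derivative facts on Ioo s t₀
  have hderiv : ∀ t ∈ Set.Ioo s t₀, HasDerivAt f (f' t) t := by
    intro t ht
    have htmem : t ∈ Set.Ico (0:ℝ) T := ⟨le_trans hs0 ht.1.le, lt_trans ht.2 ht₀T⟩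
    exact (hf_deriv t htmem).hasDerivAt
      (Ico_mem_nhds (lt_of_le_of_lt hs0 ht.1) (lt_trans ht.2 ht₀T))
  have hderiv_nonpos : ∀ t ∈ Set.Ioo s t₀, deriv f t ≤ 0 := by
    intro t ht
    have htmem : t ∈ Set.Ico (0:ℝ) T := ⟨le_trans hs0 ht.1.le, lt_trans ht.2 ht₀T⟩
    rw [(hderiv t ht).deriv]
    refine le_trans (hineq t htmem) ?_
    have hft : a ^ 2 ≤ f t := le_trans (le_max_right _ _) (hgt t ⟨ht.1, ht.2.le⟩).le
    have hsq : a ≤ Real.sqrt (f t) := by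
      have := Real.sqrt_le_sqrt hft
      rwa [Real.sqrt_sq ha] at this
    have h1 : 0 ≤ φ t := hφ_nn t htmem
    have h2 : 0 ≤ Real.sqrt (f t) := Real.sqrt_nonneg _
    nlinarith [mul_nonneg (mul_nonneg h1 h2) (sub_nonneg.2 hsq)]
  have hanti : AntitoneOn f (Set.Icc s t₀) := by
    refine antitoneOn_of_deriv_nonpos (convex_Icc s t₀)
      (hfc.mono fun x hx => ⟨le_trans hs0 hx.1, lt_of_le_of_lt hx.2 ht₀T⟩) ?_ ?_
    · rw [interior_Icc]
      exact fun t ht => (hderiv t ht).differentiableAt.differentiableWithinAt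
    · rw [interior_Icc]
      exact hderiv_nonpos
  have : f t₀ ≤ f s := hanti ⟨le_refl s, hst₀.le⟩ ⟨hst₀.le, le_refl t₀⟩ hst₀.le
  exact absurd (le_trans this hfs) (not_le.2 hcon)
end

section
/- Let T > 0, let F, G : [0,T) → [0,∞) be functions of class C¹, let φ : [0,T) → (0,∞) be continuous, and let a > 0, b ≥ 0, c ≥ 0 be real numbers. Assume that for all t ∈ [0,T): (F+G)'(t) ≤ −φ(t)·( F(t) + a·(G(t))² − b·G(t) − c·(G(t))^{3/2} ). Set σ₀ := (c + √(ab))/a. Then for all t ∈ [0,T): G(t) + F(t) ≤ σ₀²·(1 + b + c·σ₀) + F(0) + G(0) + 1. -/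
/-!
Let `K := σ₀² (1 + b + c σ₀)`. Wherever `F + G > K` the bracket
`F + a G² - b G - c G^{3/2}` is nonnegative: if `√G ≥ σ₀` then already `a G² ≥ b G + c G^{3/2}`,
and if `√G < σ₀` then `F > K - σ₀² ≥ b G + c G^{3/2}`. So `F + G` cannot increase while it is
above `K`, and a barrier argument keeps it below `max K (F 0 + G 0)`.
-/

open Real Set

theorem le_max_of_deriv_nonpos_above_level {f f' : ℝ → ℝ} {a b K : ℝ}
    (hf : ContinuousOn f (Icc a b)) (hf' : ∀ x ∈ Ico a b, HasDerivWithinAt f (f' x) (Ici x) x)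
    (hK : ∀ x ∈ Ico a b, K < f x → f' x ≤ 0) : ∀ ⦃x⦄, x ∈ Icc a b → f x ≤ max K (f a) := by
  intro x hx
  set M := max K (f a)
  -- Compare with the barriers `M + ε (1 + (y - a))`, whose slope `ε > 0` beats `f' ≤ 0`.
  have barrier : ∀ ε > 0, f x ≤ M + ε * (1 + (x - a)) := by
    intro ε hε
    have hB' : ∀ y ∈ Ico a b,
        HasDerivWithinAt (fun y => M + ε * (1 + (y - a))) ε (Ici y) y := fun y _ => by
      simpa using (((hasDerivWithinAt_id y (Ici y)).sub_const a).const_add 1).const_mul ε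
        |>.const_add M
    have hB_above : ∀ y ∈ Ico a b, K < M + ε * (1 + (y - a)) := fun y hy => by
      nlinarith [le_max_left K (f a), hy.1]
    refine image_le_of_deriv_right_lt_deriv_boundary' hf hf' ?_ (by fun_prop) hB'
      (fun y hy hfy => (hK y hy (hfy ▸ hB_above y hy)).trans_lt hε) hx
    simp only [sub_self, add_zero, mul_one]
    linarith [le_max_right K (f a)]
  have hlen : 0 < 1 + (x - a) := by linarith [hx.1]
  refine le_of_forall_pos_le_add fun δ hδ => ?_
  simpa [div_mul_cancel₀ δ hlen.ne'] using barrier (δ / (1 + (x - a))) (by positivity)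

noncomputable def sigma0 (a b c : ℝ) : ℝ := (c + √(a * b)) / a

theorem sigma0_nonneg {a b c : ℝ} (ha : 0 < a) (hc : 0 ≤ c) : 0 ≤ sigma0 a b c := by
  unfold sigma0; positivity

theorem mul_add_le_mul_sq_of_sigma0_le {a b c s : ℝ} (ha : 0 < a) (hb : 0 ≤ b) (hc : 0 ≤ c)
    (hs : sigma0 a b c ≤ s) : c * s + b ≤ a * s ^ 2 := by
  have hr : √(a * b) ^ 2 = a * b := sq_sqrt (by positivity)
  have hσ : c + √(a * b) ≤ a * s := by
    rw [sigma0, div_le_iff₀ ha] at hs; linarith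
  have hs0 : 0 ≤ s := (sigma0_nonneg ha hc).trans hs
  have hrs : b ≤ √(a * b) * s := by
    nlinarith [mul_le_mul_of_nonneg_left hσ (sqrt_nonneg (a * b)),
      mul_nonneg (sqrt_nonneg (a * b)) hc]
  nlinarith [mul_le_mul_of_nonneg_left hσ hs0]

theorem rpow_three_halves_eq_sqrt_pow {g : ℝ} (hg : 0 ≤ g) : g ^ ((3 : ℝ) / 2) = √g ^ 3 := by
  rw [sqrt_eq_rpow, ← rpow_natCast, ← rpow_mul hg]; norm_num

theorem add_sq_sub_sub_rpow_nonneg {a b c x g : ℝ} (ha : 0 < a) (hb : 0 ≤ b) (hc : 0 ≤ c)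
    (hx : 0 ≤ x) (hg : 0 ≤ g)
    (hlevel : sigma0 a b c ^ 2 * (1 + b + c * sigma0 a b c) < x + g) :
    0 ≤ x + a * g ^ 2 - b * g - c * g ^ ((3 : ℝ) / 2) := by
  set σ := sigma0 a b c
  obtain ⟨s, hs, rfl⟩ : ∃ s, 0 ≤ s ∧ s ^ 2 = g := ⟨√g, sqrt_nonneg g, sq_sqrt hg⟩
  rw [rpow_three_halves_eq_sqrt_pow (by positivity), sqrt_sq hs]
  rcases le_or_gt σ s with hσs | hsσ
  · have := mul_add_le_mul_sq_of_sigma0_le ha hb hc hσs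
    nlinarith [sq_nonneg s]
  · have h2 : s ^ 2 ≤ σ ^ 2 := pow_le_pow_left₀ hs hsσ.le 2
    have h3 : s ^ 3 ≤ σ ^ 3 := pow_le_pow_left₀ hs hsσ.le 3
    nlinarith [mul_le_mul_of_nonneg_left h2 hb, mul_le_mul_of_nonneg_left h3 hc, pow_nonneg hs 4]

theorem ode_FG_bound_general (T : ℝ) (F G F' G' φ : ℝ → ℝ) (a b c : ℝ)
    (ha : 0 < a) (hb : 0 ≤ b) (hc : 0 ≤ c)
    (hF_nn : ∀ t ∈ Set.Ico (0:ℝ) T, 0 ≤ F t)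
    (hG_nn : ∀ t ∈ Set.Ico (0:ℝ) T, 0 ≤ G t)
    (hF_deriv : ∀ t ∈ Set.Ico (0:ℝ) T, HasDerivWithinAt F (F' t) (Set.Ico 0 T) t)
    (hG_deriv : ∀ t ∈ Set.Ico (0:ℝ) T, HasDerivWithinAt G (G' t) (Set.Ico 0 T) t)
    (hφ_pos : ∀ t ∈ Set.Ico (0:ℝ) T, 0 < φ t)
    (hineq : ∀ t ∈ Set.Ico (0:ℝ) T,
      F' t + G' t ≤ -φ t * (F t + a * (G t) ^ 2 - b * G t - c * (G t) ^ ((3:ℝ)/2))) :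
    ∀ t ∈ Set.Ico (0:ℝ) T,
      G t + F t ≤ ((c + Real.sqrt (a*b))/a) ^ 2 * (1 + b + c * ((c + Real.sqrt (a*b))/a))
        + F 0 + G 0 + 1 := by
  intro t ht
  set K := sigma0 a b c ^ 2 * (1 + b + c * sigma0 a b c)
  have hsub : Icc 0 t ⊆ Ico 0 T := Icc_subset_Ico_right ht.2
  have hcont : ContinuousOn (fun u => F u + G u) (Icc 0 t) := fun x hx =>
    ((hF_deriv x (hsub hx)).continuousWithinAt.add
      (hG_deriv x (hsub hx)).continuousWithinAt).mono hsub
  have hderiv : ∀ x ∈ Ico 0 t, HasDerivWithinAt (fun u => F u + G u) (F' x + G' x) (Ici x) x :=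
    fun x hx => have hxT : x ∈ Ico 0 T := ⟨hx.1, hx.2.trans ht.2⟩
      ((hF_deriv x hxT).add (hG_deriv x hxT)).mono_of_mem_nhdsWithin (Ico_mem_nhdsGE_of_mem hxT)
  have hdecay : ∀ x ∈ Ico 0 t, K < F x + G x → F' x + G' x ≤ 0 := fun x hx hKx =>
    have hxT : x ∈ Ico 0 T := ⟨hx.1, hx.2.trans ht.2⟩
    (hineq x hxT).trans <| mul_nonpos_of_nonpos_of_nonneg (neg_nonpos.2 (hφ_pos x hxT).le) <|
      add_sq_sub_sub_rpow_nonneg ha hb hc (hF_nn x hxT) (hG_nn x hxT) hKx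
  have hbound := le_max_of_deriv_nonpos_above_level hcont hderiv hdecay ⟨ht.1, le_rfl⟩
  have h0T : (0 : ℝ) ∈ Ico 0 T := ⟨le_rfl, ht.1.trans_lt ht.2⟩
  have hK : 0 ≤ K := by have := sigma0_nonneg (b := b) ha hc; positivity
  change G t + F t ≤ K + F 0 + G 0 + 1
  linarith [max_le_add_of_nonneg hK (add_nonneg (hF_nn 0 h0T) (hG_nn 0 h0T))]

/-- Lemma 3.3: if `(F+G)' ≤ -φ (F + a G² - b G - c G^{3/2})` on `[0,T)` with `F, G ≥ 0`,
`φ > 0`, `a > 0`, `b, c ≥ 0`, then setting `σ₀ := (c + √(ab))/a` one has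
`G + F ≤ σ₀² (1 + b + c σ₀) + F(0) + G(0) + 1` on `[0,T)`. -/
theorem ode_FG_bound (T : ℝ) (hT : 0 < T) (F G F' G' φ : ℝ → ℝ) (a b c : ℝ)
    (ha : 0 < a) (hb : 0 ≤ b) (hc : 0 ≤ c)
    (hF_nn : ∀ t ∈ Set.Ico (0:ℝ) T, 0 ≤ F t)
    (hG_nn : ∀ t ∈ Set.Ico (0:ℝ) T, 0 ≤ G t)
    (hF_deriv : ∀ t ∈ Set.Ico (0:ℝ) T, HasDerivWithinAt F (F' t) (Set.Ico 0 T) t)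
    (hG_deriv : ∀ t ∈ Set.Ico (0:ℝ) T, HasDerivWithinAt G (G' t) (Set.Ico 0 T) t)
    (hF'_cont : ContinuousOn F' (Set.Ico 0 T))
    (hG'_cont : ContinuousOn G' (Set.Ico 0 T))
    (hφ_cont : ContinuousOn φ (Set.Ico 0 T))
    (hφ_pos : ∀ t ∈ Set.Ico (0:ℝ) T, 0 < φ t)
    (hineq : ∀ t ∈ Set.Ico (0:ℝ) T,
      F' t + G' t ≤ -φ t * (F t + a * (G t) ^ 2 - b * G t - c * (G t) ^ ((3:ℝ)/2))) :
    ∀ t ∈ Set.Ico (0:ℝ) T,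
      G t + F t ≤ ((c + Real.sqrt (a*b))/a) ^ 2 * (1 + b + c * ((c + Real.sqrt (a*b))/a))
        + F 0 + G 0 + 1 :=
  ode_FG_bound_general T F G F' G' φ a b c ha hb hc hF_nn hG_nn hF_deriv hG_deriv hφ_pos hineq
end

section
/- Let H be a real Hilbert space, let A : H → H be a continuous self-adjoint nonnegative linear operator, and let m : [0,∞) → [0,∞) be a nondecreasing function. Then for all x, y ∈ H: ⟨ m(⟨Ax,x⟩) A x − m(⟨Ay,y⟩) A y , x − y ⟩ ≥ (1/2)·[ m(⟨Ax,x⟩) + m(⟨Ay,y⟩) ]·⟨A(x−y), x−y⟩. -/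
open Real
open scoped RealInnerProductSpace

/-- Lemma 3.4: if `m : [0,∞) → [0,∞)` is nondecreasing and `A` is a continuous
self-adjoint nonnegative operator, then for all `x, y`:
`⟨m(⟨Ax,x⟩)Ax - m(⟨Ay,y⟩)Ay, x - y⟩ ≥ ½ (m(⟨Ax,x⟩) + m(⟨Ay,y⟩)) ⟨A(x-y), x-y⟩`. -/
theorem monotone_operator_inequality
    {H : Type*} [NormedAddCommGroup H] [InnerProductSpace ℝ H]
    (A : H →L[ℝ] H)
    (hA_sa : ∀ x y : H, ⟪A x, y⟫ = ⟪x, A y⟫)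
    (hA_nn : ∀ x : H, 0 ≤ ⟪A x, x⟫)
    (m : ℝ → ℝ)
    (hm_nn : ∀ s : ℝ, 0 ≤ s → 0 ≤ m s)
    (hm_mono : ∀ s t : ℝ, 0 ≤ s → s ≤ t → m s ≤ m t)
    (x y : H) :
    ⟪m ⟪A x, x⟫ • A x - m ⟪A y, y⟫ • A y, x - y⟫ ≥
      (1/2) * (m ⟪A x, x⟫ + m ⟪A y, y⟫) * ⟪A (x - y), x - y⟫ := by
  have hsym : ⟪A y, x⟫ = ⟪A x, y⟫ := by rw [hA_sa, real_inner_comm]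
  have key : 0 ≤ (m ⟪A x, x⟫ - m ⟪A y, y⟫) * (⟪A x, x⟫ - ⟪A y, y⟫) := by
    rcases le_total ⟪A x, x⟫ ⟪A y, y⟫ with h | h
    · have := hm_mono _ _ (hA_nn x) h; nlinarith
    · have := hm_mono _ _ (hA_nn y) h; nlinarith
  have expand : ⟪A (x-y), x-y⟫ = ⟪A x, x⟫ - 2*⟪A x, y⟫ + ⟪A y, y⟫ := by
    simp only [map_sub, inner_sub_left, inner_sub_right, hsym]; ring
  rw [inner_sub_left, real_inner_smul_left, real_inner_smul_left,
    inner_sub_right, inner_sub_right, expand, hsym]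
  nlinarith [key]
end

section
/- Let H be a real Hilbert space, let 0 ≤ p ≤ 1 and δ ≥ 0, and let ε satisfy 0 < ε < 1/(2+2δ). Let w₀ ∈ H and let θ_ε : [0,∞) → H be the solution of ε θ_ε''(t) + (1+t)^{-p} θ_ε'(t) = 0 with θ_ε(0) = 0 and θ_ε'(0) = w₀. Then there exists a constant C_δ > 0, depending only on δ and p and independent of ε and of w₀, such that ∫₀^∞ (1+t)^{δ} |θ_ε'(t)| dt ≤ C_δ |w₀| ε. -/
open Real MeasureTheory
open scoped RealInnerProductSpace

/-- `θ` (with derivatives `θ'`, `θ''`) is the corrector: the solution of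
`ε θ'' + (1+t)^{-p} θ' = 0`, `θ(0) = 0`, `θ'(0) = w₀`. -/
def IsCorrector {H : Type*} [NormedAddCommGroup H] [InnerProductSpace ℝ H]
    (p ε : ℝ) (w₀ : H) (θ θ' θ'' : ℝ → H) : Prop :=
  θ 0 = 0 ∧ θ' 0 = w₀ ∧
  (∀ t ∈ Set.Ici (0:ℝ), HasDerivWithinAt θ (θ' t) (Set.Ici 0) t) ∧
  (∀ t ∈ Set.Ici (0:ℝ), HasDerivWithinAt θ' (θ'' t) (Set.Ici 0) t) ∧
  (∀ t ∈ Set.Ici (0:ℝ), ε • θ'' t + ((1+t) ^ (-p)) • θ' t = 0)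

/-!
Since `θ'' = -(ε⁻¹ (1+t)^{-p}) θ'` and `(1+t)^{-p} ≥ (1+t)^{-1}` for `p ≤ 1`, the energy
`(1+t)^{2/ε} |θ'(t)|²` is nonincreasing, so `|θ'(t)| ≤ (1+t)^{-1/ε} |w₀|`. The weighted integral
is then at most `|w₀| ∫₀^∞ (1+t)^{δ-1/ε} dt = |w₀| / (1/ε - δ - 1)`, which is `≤ 2ε|w₀|`
as soon as `ε (2+2δ) < 1`.
-/

section

open Set Filter Topology

lemma integrableOn_one_add_rpow_Ioi {b : ℝ} (hb : b < -1) :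
    IntegrableOn (fun t : ℝ => (1 + t) ^ b) (Ioi 0) := by
  simpa only [add_comm] using integrableOn_add_rpow_Ioi_of_lt hb (by norm_num : -(1:ℝ) < 0)

lemma integral_one_add_rpow_Ioi {b : ℝ} (hb : b < -1) :
    ∫ t in Ioi (0 : ℝ), (1 + t) ^ b = -(b + 1)⁻¹ := by
  have hb₁ : b + 1 ≠ 0 := by linarith
  have hderiv : ∀ t ∈ Ici (0 : ℝ),
      HasDerivAt (fun t => (1 + t) ^ (b + 1) / (b + 1)) ((1 + t) ^ b) t := by
    intro t ht
    refine ((((hasDerivAt_id' t).const_add 1).rpow_const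
      (p := b + 1) (Or.inl (by linarith [mem_Ici.1 ht]))).div_const (b + 1)).congr_deriv ?_
    field_simp
    simp
  have hlim : Tendsto (fun t : ℝ => (1 + t) ^ (b + 1) / (b + 1)) atTop (𝓝 0) := by
    simpa using ((tendsto_rpow_neg_atTop (y := -(b + 1)) (by linarith)).comp
      (tendsto_atTop_add_const_left _ 1 tendsto_id)).div_const (b + 1)
  rw [integral_Ioi_of_hasDerivAt_of_tendsto' hderiv (integrableOn_one_add_rpow_Ioi hb) hlim]
  simp [div_eq_mul_inv]

variable {E : Type*} [NormedAddCommGroup E] [InnerProductSpace ℝ E]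

theorem antitoneOn_one_add_rpow_mul_norm_sq {f f' : ℝ → E} {a : ℝ → ℝ} {c : ℝ}
    (hf : ∀ t ∈ Ici (0 : ℝ), HasDerivWithinAt f (f' t) (Ici 0) t)
    (hode : ∀ t ∈ Ici (0 : ℝ), f' t = -a t • f t)
    (ha : ∀ t ∈ Ici (0 : ℝ), c ≤ (1 + t) * a t) :
    AntitoneOn (fun t => (1 + t) ^ (2 * c) * ‖f t‖ ^ 2) (Ici 0) := by
  have hderiv : ∀ t ∈ Ici (0 : ℝ), HasDerivWithinAt (fun t => (1 + t) ^ (2 * c) * ‖f t‖ ^ 2)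
      (2 * (1 + t) ^ (2 * c - 1) * ‖f t‖ ^ 2 * (c - (1 + t) * a t)) (Ici 0) t := by
    intro t ht
    have h1t : 0 < 1 + t := by linarith [mem_Ici.1 ht]
    refine ((((hasDerivAt_id' t).const_add 1).rpow_const (p := 2 * c)
      (Or.inl h1t.ne')).hasDerivWithinAt.mul (hf t ht).norm_sq).congr_deriv ?_
    rw [hode t ht, inner_smul_right, real_inner_self_eq_norm_sq, rpow_sub h1t, rpow_one]
    field_simp
    ring
  refine antitoneOn_of_hasDerivWithinAt_nonpos (convex_Ici 0)
    (f' := fun t => 2 * (1 + t) ^ (2 * c - 1) * ‖f t‖ ^ 2 * (c - (1 + t) * a t))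
    (fun t ht => (hderiv t ht).continuousWithinAt) ?_ ?_ <;> rw [interior_Ici]
  · exact fun t ht => (hderiv t (Ioi_subset_Ici_self ht)).mono Ioi_subset_Ici_self
  · intro t ht
    have h1t : 0 ≤ 1 + t := by linarith [mem_Ioi.1 ht]
    exact mul_nonpos_of_nonneg_of_nonpos (by have := rpow_nonneg h1t (2 * c - 1); positivity)
      (sub_nonpos.2 (ha t (Ioi_subset_Ici_self ht)))

theorem norm_le_one_add_rpow_neg_mul_norm {f f' : ℝ → E} {a : ℝ → ℝ} {c : ℝ}
    (hf : ∀ t ∈ Ici (0 : ℝ), HasDerivWithinAt f (f' t) (Ici 0) t)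
    (hode : ∀ t ∈ Ici (0 : ℝ), f' t = -a t • f t)
    (ha : ∀ t ∈ Ici (0 : ℝ), c ≤ (1 + t) * a t) {t : ℝ} (ht : 0 ≤ t) :
    ‖f t‖ ≤ (1 + t) ^ (-c) * ‖f 0‖ := by
  have h1t : 0 < 1 + t := by linarith
  have hmono := antitoneOn_one_add_rpow_mul_norm_sq hf hode ha (mem_Ici.2 le_rfl) (mem_Ici.2 ht) ht
  simp only [add_zero, one_rpow, one_mul] at hmono
  refine (pow_le_pow_iff_left₀ (norm_nonneg _) (by positivity) two_ne_zero).1 ?_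
  calc ‖f t‖ ^ 2 = (1 + t) ^ (-(2 * c)) * ((1 + t) ^ (2 * c) * ‖f t‖ ^ 2) := by
        rw [← mul_assoc, ← rpow_add h1t, neg_add_cancel, rpow_zero, one_mul]
    _ ≤ (1 + t) ^ (-(2 * c)) * ‖f 0‖ ^ 2 := by gcongr
    _ = ((1 + t) ^ (-c) * ‖f 0‖) ^ 2 := by
        rw [mul_pow, ← rpow_mul_natCast h1t.le]
        ring_nf

lemma integrableOn_Ici_and_integral_le_of_le_one_add_rpow {f : ℝ → ℝ} {b M : ℝ} (hb : b < -1)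
    (hf : ContinuousOn f (Ici 0)) (hf₀ : ∀ t ∈ Ici (0 : ℝ), 0 ≤ f t)
    (hle : ∀ t ∈ Ici (0 : ℝ), f t ≤ (1 + t) ^ b * M) :
    IntegrableOn f (Ici 0) ∧ ∫ t in Ici (0 : ℝ), f t ≤ -(b + 1)⁻¹ * M := by
  have hg : IntegrableOn (fun t : ℝ => (1 + t) ^ b * M) (Ici 0) :=
    (integrableOn_Ici_iff_integrableOn_Ioi).2 ((integrableOn_one_add_rpow_Ioi hb).mul_const M)
  have hfi : IntegrableOn f (Ici 0) := by
    refine hg.mono' (hf.aestronglyMeasurable measurableSet_Ici) ?_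
    filter_upwards [ae_restrict_mem measurableSet_Ici] with t ht
    rw [Real.norm_eq_abs, abs_of_nonneg (hf₀ t ht)]
    exact hle t ht
  refine ⟨hfi, ?_⟩
  calc ∫ t in Ici (0 : ℝ), f t ≤ ∫ t in Ici (0 : ℝ), (1 + t) ^ b * M :=
        setIntegral_mono_on hfi hg measurableSet_Ici hle
    _ = -(b + 1)⁻¹ * M := by
        rw [integral_Ici_eq_integral_Ioi, integral_mul_const, integral_one_add_rpow_Ioi hb]

namespace IsCorrector

variable {p ε : ℝ} {w₀ : E} {θ θ' θ'' : ℝ → E}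

theorem norm_deriv_le (hc : IsCorrector p ε w₀ θ θ' θ'') (hp : p ≤ 1) (hε : 0 < ε)
    {t : ℝ} (ht : 0 ≤ t) : ‖θ' t‖ ≤ (1 + t) ^ (-ε⁻¹) * ‖w₀‖ := by
  obtain ⟨-, hθ'0, -, hθ'', hode⟩ := hc
  rw [← hθ'0]
  refine norm_le_one_add_rpow_neg_mul_norm hθ'' (a := fun t => ε⁻¹ * (1 + t) ^ (-p))
    (fun t ht => ?_) (fun t ht => ?_) ht
  · calc θ'' t = ε⁻¹ • (ε • θ'' t) := (inv_smul_smul₀ hε.ne' _).symm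
      _ = ε⁻¹ • -((1 + t) ^ (-p) • θ' t) := by rw [eq_neg_of_add_eq_zero_left (hode t ht)]
      _ = -(ε⁻¹ * (1 + t) ^ (-p)) • θ' t := by rw [smul_neg, smul_smul, neg_smul]
  · have h1t : 1 ≤ 1 + t := by linarith [mem_Ici.1 ht]
    have : (1 + t) ^ (-1 : ℝ) ≤ (1 + t) ^ (-p) := rpow_le_rpow_of_exponent_le h1t (by linarith)
    rw [rpow_neg_one] at this
    calc ε⁻¹ = (1 + t) * (ε⁻¹ * (1 + t)⁻¹) := by field_simp
      _ ≤ (1 + t) * (ε⁻¹ * (1 + t) ^ (-p)) := by gcongr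

theorem continuousOn_deriv (hc : IsCorrector p ε w₀ θ θ' θ'') : ContinuousOn θ' (Ici 0) :=
  fun t ht => (hc.2.2.2.1 t ht).continuousWithinAt

end IsCorrector

end

theorem corrector_integral_estimate_general
    {H : Type*} [NormedAddCommGroup H] [InnerProductSpace ℝ H]
    (p δ : ℝ) (hp1 : p ≤ 1) :
    ∃ C > 0, ∀ ε : ℝ, 0 < ε → ε < 1/(2+2*δ) → ∀ w₀ : H, ∀ θ θ' θ'' : ℝ → H,
      IsCorrector p ε w₀ θ θ' θ'' →
      IntegrableOn (fun t => (1+t) ^ δ * ‖θ' t‖) (Set.Ici (0:ℝ)) ∧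
      ∫ t in Set.Ici (0:ℝ), (1+t) ^ δ * ‖θ' t‖ ≤ C * ‖w₀‖ * ε := by
  refine ⟨2, two_pos, fun ε hε hεδ w₀ θ θ' θ'' hc => ?_⟩
  have hδ : 0 < 2 + 2 * δ := one_div_pos.1 (hε.trans hεδ)
  have hεδ' : ε * (2 + 2 * δ) < 1 := (lt_div_iff₀ hδ).1 hεδ
  have hεinv : ε * ε⁻¹ = 1 := mul_inv_cancel₀ hε.ne'
  have hb : δ - ε⁻¹ < -1 := by nlinarith
  have hle : ∀ t ∈ Set.Ici (0 : ℝ), (1 + t) ^ δ * ‖θ' t‖ ≤ (1 + t) ^ (δ - ε⁻¹) * ‖w₀‖ := by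
    intro t (ht : 0 ≤ t)
    rw [sub_eq_add_neg, rpow_add (by linarith), mul_assoc]
    exact mul_le_mul_of_nonneg_left (hc.norm_deriv_le hp1 hε ht) (rpow_nonneg (by linarith) _)
  obtain ⟨hint, hbound⟩ := integrableOn_Ici_and_integral_le_of_le_one_add_rpow hb
    ((ContinuousOn.rpow_const (f := fun t : ℝ => 1 + t) (by fun_prop) fun t (ht : 0 ≤ t) =>
      Or.inl (by linarith)).mul hc.continuousOn_deriv.norm)
    (fun t (ht : 0 ≤ t) => mul_nonneg (rpow_nonneg (by linarith) _) (norm_nonneg _)) hle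
  refine ⟨hint, hbound.trans ?_⟩
  have : -(δ - ε⁻¹ + 1)⁻¹ ≤ 2 * ε := by
    rw [← inv_neg, inv_le_iff_one_le_mul₀ (by linarith)]
    nlinarith
  nlinarith [norm_nonneg w₀]

/-- Lemma 3.5: for `0 ≤ p ≤ 1`, `δ ≥ 0`, and `0 < ε < (2+2δ)⁻¹`, there is a constant
`C_δ > 0` independent of `ε` and `w₀` with `∫₀^∞ (1+t)^δ |θ_ε'(t)| dt ≤ C_δ |w₀| ε`. -/
theorem corrector_integral_estimate
    {H : Type*} [NormedAddCommGroup H] [InnerProductSpace ℝ H]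
    (p δ : ℝ) (hp0 : 0 ≤ p) (hp1 : p ≤ 1) (hδ : 0 ≤ δ) :
    ∃ C > 0, ∀ ε : ℝ, 0 < ε → ε < 1/(2+2*δ) → ∀ w₀ : H, ∀ θ θ' θ'' : ℝ → H,
      IsCorrector p ε w₀ θ θ' θ'' →
      IntegrableOn (fun t => (1+t) ^ δ * ‖θ' t‖) (Set.Ici (0:ℝ)) ∧
      ∫ t in Set.Ici (0:ℝ), (1+t) ^ δ * ‖θ' t‖ ≤ C * ‖w₀‖ * ε :=
  corrector_integral_estimate_general p δ hp1
end

section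
/- Let H be a real Hilbert space, A : H → H a continuous self-adjoint nonnegative linear operator, 0 ≤ p ≤ 1, γ ≥ 1, u₀, u₁ ∈ H with ⟨Au₀,u₀⟩ > 0, and K₀, K₁ > 0 constants. Then there exists ε₀ > 0 (depending only on γ, p, K₀, K₁ and the data u₀, u₁) with the following property: if ε ∈ (0,ε₀], S > 0, and u : [0,S) → H is a C² solution of ε u''(t) + (1+t)^{-p} u'(t) + ⟨Au(t),u(t)⟩^γ A u(t) = 0 with u(0) = u₀, u'(0) = u₁, such that for all t ∈ [0,S): ⟨Au(t),u(t)⟩ > 0, |⟨u'(t), Au(t)⟩|/⟨Au(t),u(t)⟩ ≤ K₀/(1+t), and ⟨Au(t),u(t)⟩^{γ−1}|Au(t)|² ≤ K₁ (1+t)^{−(p+1)}, then for all t ∈ [0,S): |u'(t)|² (1+t)^{1−p} / ⟨Au(t),u(t)⟩^{γ+1} ≤ max{ 4K₁ , |u₁|²/⟨Au₀,u₀⟩^{γ+1} }. -/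
open Real Set
open scoped RealInnerProductSpace

/-! A level `M ≥ max (4K₁, Q(0))` of the energy `Q = |u'|² (1+t)^(1-p) / ⟨Au,u⟩^(γ+1)` cannot be
crossed, because `Q' < 0` wherever `Q = M`. Pairing the equation with `u'` gives
`ε (|u'|²)' = -2 (1+t)^(-p) |u'|² - 2 ⟨Au,u⟩^γ ⟨Au,u'⟩`. On the level set, Cauchy–Schwarz and the
bound on `⟨Au,u⟩^(γ-1) |Au|²` make the cross term at most half of the damping term, and the
remaining terms of `ε Q' / Q`, controlled by the bound on `⟨u',Au⟩ / ⟨Au,u⟩`, are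
at most `ε (1 - p + 2(γ+1)K₀) / (1+t)` and lose against `(1+t)^(-p) ≥ (1+t)⁻¹` once `ε` is small. -/

theorem le_of_hasDerivWithinAt_neg_of_eq {f f' : ℝ → ℝ} {a b M : ℝ}
    (hf : ∀ x ∈ Ico a b, HasDerivWithinAt f (f' x) (Ico a b) x) (ha : f a ≤ M)
    (hneg : ∀ x ∈ Ico a b, f x = M → f' x < 0) : ∀ t ∈ Ico a b, f t ≤ M := by
  intro t ht
  have hsub : Icc a t ⊆ Ico a b := Icc_subset_Ico_right ht.2
  refine image_le_of_deriv_right_lt_deriv_boundary' (B := fun _ ↦ M) (B' := fun _ ↦ 0)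
    (fun x hx ↦ (hf x (hsub hx)).continuousWithinAt.mono hsub) (fun x hx ↦ ?_) ha
    continuousOn_const (fun x _ ↦ hasDerivWithinAt_const x _ M)
    (fun x hx ↦ hneg x (hsub (Ico_subset_Icc_self hx))) (right_mem_Icc.2 ht.1)
  have hx : x ∈ Ico a b := hsub (Ico_subset_Icc_self hx)
  exact (hf x hx).mono_of_mem_nhdsWithin (Ico_mem_nhdsGE_of_mem hx)

section

variable {H : Type*} [NormedAddCommGroup H] [InnerProductSpace ℝ H]

theorem hasDerivWithinAt_inner_apply_self {A : H →L[ℝ] H} (hA : ∀ x y, ⟪A x, y⟫ = ⟪x, A y⟫)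
    {u : ℝ → H} {v : H} {s : Set ℝ} {t : ℝ} (hu : HasDerivWithinAt u v s t) :
    HasDerivWithinAt (fun t ↦ ⟪A (u t), u t⟫) (2 * ⟪A (u t), v⟫) s t := by
  refine ((A.hasFDerivAt.comp_hasDerivWithinAt t hu).inner ℝ hu).congr_deriv ?_
  rw [Function.comp_apply, hA v, real_inner_comm v]
  ring

noncomputable def energyQ (A : H →L[ℝ] H) (p γ : ℝ) (u u' : ℝ → H) (t : ℝ) : ℝ :=
  ‖u' t‖ ^ 2 * (1 + t) ^ (1 - p) / ⟪A (u t), u t⟫ ^ (γ + 1)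

theorem hasDerivWithinAt_energyQ {A : H →L[ℝ] H} (hA : ∀ x y, ⟪A x, y⟫ = ⟪x, A y⟫)
    (p γ : ℝ) {u u' : ℝ → H} {w : H} {s : Set ℝ} {t : ℝ}
    (hu : HasDerivWithinAt u (u' t) s t) (hu' : HasDerivWithinAt u' w s t)
    (ht : 0 < 1 + t) (ha : 0 < ⟪A (u t), u t⟫) :
    HasDerivWithinAt (energyQ A p γ u u')
      ((2 * ⟪u' t, w⟫ + ‖u' t‖ ^ 2 *
          ((1 - p) / (1 + t) - 2 * (γ + 1) * ⟪A (u t), u' t⟫ / ⟪A (u t), u t⟫)) *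
        ((1 + t) ^ (1 - p) / ⟪A (u t), u t⟫ ^ (γ + 1))) s t := by
  have hτ := (((hasDerivAt_id t).const_add 1).hasDerivWithinAt (s := s)).rpow_const
    (p := 1 - p) (Or.inl ht.ne')
  have hD := (hasDerivWithinAt_inner_apply_self hA hu).rpow_const (p := γ + 1) (Or.inl ha.ne')
  refine ((hu'.norm_sq.mul hτ).div hD (rpow_pos_of_pos ha _).ne').congr_deriv ?_
  simp only [id, Pi.mul_apply]
  rw [rpow_sub_one ht.ne', rpow_sub_one ha.ne']
  field_simp
  ring

theorem two_mul_rpow_mul_abs_inner_le {A : H →L[ℝ] H} {x v : H} {p γ τ K₁ M : ℝ}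
    (hτ : 0 < τ) (ha : 0 < ⟪A x, x⟫) (hM : 4 * K₁ ≤ M)
    (hK₁ : ⟪A x, x⟫ ^ (γ - 1) * ‖A x‖ ^ 2 ≤ K₁ * τ ^ (-(p + 1)))
    (hlevel : ‖v‖ ^ 2 * τ ^ (1 - p) = M * ⟪A x, x⟫ ^ (γ + 1)) :
    2 * ⟪A x, x⟫ ^ γ * |⟪A x, v⟫| ≤ τ ^ (-p) * ‖v‖ ^ 2 := by
  set a := ⟪A x, x⟫
  have hCS : ⟪A x, v⟫ ^ 2 ≤ ‖A x‖ ^ 2 * ‖v‖ ^ 2 := by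
    rw [← sq_abs, ← mul_pow]
    exact pow_le_pow_left₀ (abs_nonneg _) (abs_real_inner_le_norm _ _) 2
  have ha_split : (a ^ γ) ^ 2 = a ^ (γ + 1) * a ^ (γ - 1) := by
    rw [← rpow_add ha, ← rpow_mul_natCast ha.le]
    ring_nf
  have hτ_split : τ ^ (1 - p) * τ ^ (-(p + 1)) = (τ ^ (-p)) ^ 2 := by
    rw [← rpow_add hτ, ← rpow_mul_natCast hτ.le]
    ring_nf
  refine (pow_le_pow_iff_left₀ (by positivity) (by positivity) two_ne_zero).mp ?_
  calc (2 * a ^ γ * |⟪A x, v⟫|) ^ 2 = 4 * (a ^ γ) ^ 2 * ⟪A x, v⟫ ^ 2 := by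
        rw [mul_pow, mul_pow, sq_abs]
        ring
    _ ≤ 4 * (a ^ γ) ^ 2 * (‖A x‖ ^ 2 * ‖v‖ ^ 2) := by gcongr
    _ = 4 * a ^ (γ + 1) * (a ^ (γ - 1) * ‖A x‖ ^ 2) * ‖v‖ ^ 2 := by
        rw [ha_split]
        ring
    _ ≤ 4 * a ^ (γ + 1) * (K₁ * τ ^ (-(p + 1))) * ‖v‖ ^ 2 := by gcongr
    _ ≤ M * a ^ (γ + 1) * τ ^ (-(p + 1)) * ‖v‖ ^ 2 := by
        have := mul_le_mul_of_nonneg_right hM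
          (by positivity : 0 ≤ a ^ (γ + 1) * τ ^ (-(p + 1)) * ‖v‖ ^ 2)
        linarith
    _ = (τ ^ (-p) * ‖v‖ ^ 2) ^ 2 := by
        rw [← hlevel, mul_pow, ← hτ_split]
        ring

theorem energyQ_rate_neg_of_eq {A : H →L[ℝ] H} {x v w : H} {ε p γ τ K₀ K₁ M : ℝ}
    (hε : 0 < ε) (hτ : 1 ≤ τ) (hp : p ≤ 1) (hγ : 0 ≤ γ + 1) (hK₁ : 0 < K₁) (hM : 4 * K₁ ≤ M)
    (hsmall : ε * ((1 - p) + 2 * (γ + 1) * K₀) < 1)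
    (hode : ε • w + τ ^ (-p) • v + ⟪A x, x⟫ ^ γ • A x = 0) (ha : 0 < ⟪A x, x⟫)
    (hdrift : |⟪v, A x⟫| / ⟪A x, x⟫ ≤ K₀ / τ)
    (hforce : ⟪A x, x⟫ ^ (γ - 1) * ‖A x‖ ^ 2 ≤ K₁ * τ ^ (-(p + 1)))
    (hlevel : ‖v‖ ^ 2 * τ ^ (1 - p) / ⟪A x, x⟫ ^ (γ + 1) = M) :
    2 * ⟪v, w⟫ + ‖v‖ ^ 2 * ((1 - p) / τ - 2 * (γ + 1) * ⟪A x, v⟫ / ⟪A x, x⟫) < 0 := by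
  set a := ⟪A x, x⟫
  set W := ⟪A x, v⟫
  have hτ0 : 0 < τ := one_pos.trans_le hτ
  rw [div_eq_iff (rpow_pos_of_pos ha _).ne'] at hlevel
  have hv : 0 < ‖v‖ ^ 2 := by
    have : 0 < ‖v‖ ^ 2 * τ ^ (1 - p) := by
      rw [hlevel]
      exact mul_pos (by linarith) (rpow_pos_of_pos ha _)
    exact pos_of_mul_pos_left this (rpow_pos_of_pos hτ0 _).le
  have henergy : ε * ⟪v, w⟫ + τ ^ (-p) * ‖v‖ ^ 2 + a ^ γ * W = 0 := by
    have := congrArg (inner ℝ v) hode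
    rwa [inner_add_right, inner_add_right, inner_smul_right, inner_smul_right, inner_smul_right,
      real_inner_self_eq_norm_sq, real_inner_comm (A x), inner_zero_right] at this
  have hcross : -(2 * a ^ γ * W) ≤ τ ^ (-p) * ‖v‖ ^ 2 :=
    calc -(2 * a ^ γ * W) = 2 * a ^ γ * -W := by ring
      _ ≤ 2 * a ^ γ * |W| := by gcongr; exact neg_le_abs W
      _ ≤ τ ^ (-p) * ‖v‖ ^ 2 := two_mul_rpow_mul_abs_inner_le hτ0 ha hM hforce hlevel
  have hW : -(W / a) ≤ K₀ / τ := by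
    rw [real_inner_comm] at hdrift
    refine (neg_le_abs _).trans ?_
    rwa [abs_div, abs_of_pos ha]
  have hdecay : τ⁻¹ ≤ τ ^ (-p) := by
    rw [← rpow_neg_one]
    exact rpow_le_rpow_of_exponent_le hτ (by linarith)
  have hrate : ε * (2 * ⟪v, w⟫ + ‖v‖ ^ 2 * ((1 - p) / τ - 2 * (γ + 1) * W / a)) < 0 :=
    calc ε * (2 * ⟪v, w⟫ + ‖v‖ ^ 2 * ((1 - p) / τ - 2 * (γ + 1) * W / a))
        = -2 * τ ^ (-p) * ‖v‖ ^ 2 - 2 * a ^ γ * W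
            + ε * ‖v‖ ^ 2 * ((1 - p) / τ + 2 * (γ + 1) * -(W / a)) := by
          linear_combination 2 * henergy
      _ ≤ -τ ^ (-p) * ‖v‖ ^ 2 + ε * ‖v‖ ^ 2 * ((1 - p) / τ + 2 * (γ + 1) * (K₀ / τ)) := by
          gcongr
          linarith
      _ = -τ ^ (-p) * ‖v‖ ^ 2 + τ⁻¹ * ‖v‖ ^ 2 * (ε * ((1 - p) + 2 * (γ + 1) * K₀)) := by
          field_simp
      _ < -τ ^ (-p) * ‖v‖ ^ 2 + τ⁻¹ * ‖v‖ ^ 2 := by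
          have := mul_lt_of_lt_one_right (by positivity : 0 < τ⁻¹ * ‖v‖ ^ 2) hsmall
          linarith
      _ ≤ 0 := by linarith [mul_le_mul_of_nonneg_right hdecay hv.le]
  exact neg_of_mul_neg_right hrate hε.le

end

theorem apriori_Q_estimate_general
    {H : Type*} [NormedAddCommGroup H] [InnerProductSpace ℝ H]
    (A : H →L[ℝ] H)
    (hA_sa : ∀ x y : H, ⟪A x, y⟫ = ⟪x, A y⟫)
    (p γ : ℝ) (hp1 : p ≤ 1) (hγ : 1 ≤ γ)
    (u₀ u₁ : H)
    (K₀ K₁ : ℝ) (hK₀ : 0 < K₀) (hK₁ : 0 < K₁) :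
    ∃ ε₀ > 0, ∀ ε : ℝ, 0 < ε → ε ≤ ε₀ → ∀ S : ℝ, 0 < S →
      ∀ u u' u'' : ℝ → H,
        u 0 = u₀ → u' 0 = u₁ →
        (∀ t ∈ Set.Ico (0:ℝ) S, HasDerivWithinAt u (u' t) (Set.Ico 0 S) t) →
        (∀ t ∈ Set.Ico (0:ℝ) S, HasDerivWithinAt u' (u'' t) (Set.Ico 0 S) t) →
        ContinuousOn u'' (Set.Ico 0 S) →
        (∀ t ∈ Set.Ico (0:ℝ) S,
          ε • u'' t + ((1+t) ^ (-p)) • u' t + (⟪A (u t), u t⟫ ^ γ) • A (u t) = 0) →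
        (∀ t ∈ Set.Ico (0:ℝ) S, 0 < ⟪A (u t), u t⟫) →
        (∀ t ∈ Set.Ico (0:ℝ) S,
          |⟪u' t, A (u t)⟫| / ⟪A (u t), u t⟫ ≤ K₀ / (1+t)) →
        (∀ t ∈ Set.Ico (0:ℝ) S,
          ⟪A (u t), u t⟫ ^ (γ-1) * ‖A (u t)‖ ^ 2 ≤ K₁ * (1+t) ^ (-(p+1))) →
        ∀ t ∈ Set.Ico (0:ℝ) S,
          ‖u' t‖ ^ 2 * (1+t) ^ (1-p) / ⟪A (u t), u t⟫ ^ (γ+1) ≤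
            max (4 * K₁) (‖u₁‖ ^ 2 / ⟪A u₀, u₀⟫ ^ (γ+1)) := by
  have hc : 0 < (1 - p) + 2 * (γ + 1) * K₀ + 1 := by
    linarith [mul_nonneg (by linarith : (0 : ℝ) ≤ γ + 1) hK₀.le]
  refine ⟨1 / ((1 - p) + 2 * (γ + 1) * K₀ + 1), by positivity, ?_⟩
  intro ε hε hεle S _ u u' u'' hu0 hu'0 hu hu' _ hode hpos hdrift hforce
  have hsmall : ε * ((1 - p) + 2 * (γ + 1) * K₀) < 1 := by
    rw [le_div_iff₀ hc] at hεle
    linarith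
  refine le_of_hasDerivWithinAt_neg_of_eq (f := energyQ A p γ u u')
    (fun x hx ↦ hasDerivWithinAt_energyQ hA_sa p γ (hu x hx) (hu' x hx) (by linarith [hx.1])
      (hpos x hx)) ?_ ?_
  · simp [energyQ, hu0, hu'0]
  · intro x hx hlevel
    exact mul_neg_of_neg_of_pos
      (energyQ_rate_neg_of_eq hε (by linarith [hx.1]) hp1 (by linarith) hK₁ (le_max_left _ _)
        hsmall (hode x hx) (hpos x hx) (hdrift x hx) (hforce x hx) hlevel)
      (div_pos (rpow_pos_of_pos (by linarith [hx.1]) _) (rpow_pos_of_pos (hpos x hx) _))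

/-- A priori estimate (3.12) of Proposition 3.6: under the conditional bounds
(3.10)–(3.11) on `[0,S)`, the energy `Q_ε(t) = |u'|²(1+t)^{1-p}/⟨Au,u⟩^{γ+1}`
satisfies `Q_ε(t) ≤ max{4K₁, Q(0)}` for every `ε` small enough. -/
theorem apriori_Q_estimate
    {H : Type*} [NormedAddCommGroup H] [InnerProductSpace ℝ H]
    (A : H →L[ℝ] H)
    (hA_sa : ∀ x y : H, ⟪A x, y⟫ = ⟪x, A y⟫)
    (hA_nn : ∀ x : H, 0 ≤ ⟪A x, x⟫)
    (p γ : ℝ) (hp0 : 0 ≤ p) (hp1 : p ≤ 1) (hγ : 1 ≤ γ)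
    (u₀ u₁ : H) (hmdg : 0 < ⟪A u₀, u₀⟫)
    (K₀ K₁ : ℝ) (hK₀ : 0 < K₀) (hK₁ : 0 < K₁) :
    ∃ ε₀ > 0, ∀ ε : ℝ, 0 < ε → ε ≤ ε₀ → ∀ S : ℝ, 0 < S →
      ∀ u u' u'' : ℝ → H,
        u 0 = u₀ → u' 0 = u₁ →
        (∀ t ∈ Set.Ico (0:ℝ) S, HasDerivWithinAt u (u' t) (Set.Ico 0 S) t) →
        (∀ t ∈ Set.Ico (0:ℝ) S, HasDerivWithinAt u' (u'' t) (Set.Ico 0 S) t) →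
        ContinuousOn u'' (Set.Ico 0 S) →
        (∀ t ∈ Set.Ico (0:ℝ) S,
          ε • u'' t + ((1+t) ^ (-p)) • u' t + (⟪A (u t), u t⟫ ^ γ) • A (u t) = 0) →
        (∀ t ∈ Set.Ico (0:ℝ) S, 0 < ⟪A (u t), u t⟫) →
        (∀ t ∈ Set.Ico (0:ℝ) S,
          |⟪u' t, A (u t)⟫| / ⟪A (u t), u t⟫ ≤ K₀ / (1+t)) →
        (∀ t ∈ Set.Ico (0:ℝ) S,
          ⟪A (u t), u t⟫ ^ (γ-1) * ‖A (u t)‖ ^ 2 ≤ K₁ * (1+t) ^ (-(p+1))) →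
        ∀ t ∈ Set.Ico (0:ℝ) S,
          ‖u' t‖ ^ 2 * (1+t) ^ (1-p) / ⟪A (u t), u t⟫ ^ (γ+1) ≤
            max (4 * K₁) (‖u₁‖ ^ 2 / ⟪A u₀, u₀⟫ ^ (γ+1)) :=
  apriori_Q_estimate_general A hA_sa p γ hp1 hγ u₀ u₁ K₀ K₁ hK₀ hK₁
end

section
/- Let H be a real Hilbert space, A : H → H a continuous self-adjoint nonnegative linear operator, 0 ≤ p ≤ 1, γ ≥ 1, u₀, u₁ ∈ H with ⟨Au₀,u₀⟩ > 0, and K₀, K₁ > 0 constants. Then there exist ε₀ > 0 and a constant L > 0 (both depending only on γ, p, K₀, K₁ and the data u₀, u₁, but not on ε, S or t) with the following property: if ε ∈ (0,ε₀], S > 0, and u : [0,S) → H is a C² solution of ε u''(t) + (1+t)^{-p} u'(t) + ⟨Au(t),u(t)⟩^γ A u(t) = 0 with u(0) = u₀, u'(0) = u₁, such that for all t ∈ [0,S): ⟨Au(t),u(t)⟩ > 0, |⟨u'(t), Au(t)⟩|/⟨Au(t),u(t)⟩ ≤ K₀/(1+t), and ⟨Au(t),u(t)⟩^{γ−1}|Au(t)|²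 ≤ K₁ (1+t)^{−(p+1)}, then for all t ∈ [0,S): [ ε ⟨Au'(t),u'(t)⟩/⟨Au(t),u(t)⟩ + ⟨Au(t),u(t)⟩^{γ−1}|Au(t)|² ] (1+t)^{p+1} ≤ L. -/
open Real
open scoped RealInnerProductSpace

/-!
Along a solution the energy `H_ε` is differentiable, and testing the equation against `A u'`
removes `u''` from its derivative. Where `H_ε ≥ 2 K₁`, the assumed bound on the potential part
`⟪Au,u⟫^(γ-1) |Au|²` makes it smaller than the kinetic part `ε ⟪Au',u'⟫/⟪Au,u⟫`; with the bound
`|⟪u',Au⟫|/⟪Au,u⟫ ≤ K₀/(1+t)` this gives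
`H_ε' ≤ 2 (⟪Au',u'⟫/⟪Au,u⟫) (1+t) (ε (K₀γ + p + 1) - 1) ≤ 0` for `ε ≤ 1/(K₀γ + p + 1)`.
So `H_ε` can never cross the level `max (H_{ε₀}(0)) (2 K₁)`.
-/

open Set

theorem image_le_of_deriv_right_nonpos_of_le {f f' : ℝ → ℝ} {a b L : ℝ}
    (hf : ContinuousOn f (Icc a b)) (hf' : ∀ x ∈ Ico a b, HasDerivWithinAt f (f' x) (Ici x) x)
    (ha : f a ≤ L) (bound : ∀ x ∈ Ico a b, L ≤ f x → f' x ≤ 0) :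
    ∀ ⦃x⦄, x ∈ Icc a b → f x ≤ L := by
  intro x hx
  by_contra! hlt
  set δ := (f x - L) / (x - a + 1)
  have hδ : 0 < δ := div_pos (by linarith) (by linarith [hx.1])
  have hδx : δ * (x - a + 1) = f x - L := div_mul_cancel₀ _ (by linarith [hx.1])
  -- tilting the level to slope `δ > 0` turns `f' ≤ 0` into the strict comparison Mathlib needs
  have hbarrier : f x ≤ L + δ * (x - a) := by
    refine image_le_of_deriv_right_lt_deriv_boundary hf hf' (B := fun r => L + δ * (r - a))
      (B' := fun _ => δ) (by simpa using ha)
      (fun r => by simpa using (((hasDerivAt_id r).sub_const a).const_mul δ).const_add L)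
      (fun r hr hfr => ?_) hx
    have hLr : L ≤ f r := by rw [hfr]; nlinarith [hr.1]
    exact (bound r hr hLr).trans_lt hδ
  nlinarith

theorem le_of_hasDerivWithinAt_Ico_of_deriv_nonpos {f f' : ℝ → ℝ} {a b L : ℝ}
    (hf : ∀ x ∈ Ico a b, HasDerivWithinAt f (f' x) (Ico a b) x) (ha : f a ≤ L)
    (bound : ∀ x ∈ Ico a b, L ≤ f x → f' x ≤ 0) : ∀ x ∈ Ico a b, f x ≤ L := by
  intro t ht
  have hsub : Icc a t ⊆ Ico a b := Icc_subset_Ico_right ht.2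
  have hsub' : Ico a t ⊆ Ico a b := Ico_subset_Ico_right ht.2.le
  exact image_le_of_deriv_right_nonpos_of_le
    (fun x hx => (hf x (hsub hx)).continuousWithinAt.mono hsub)
    (fun x hx => (hf x (hsub' hx)).mono_of_mem_nhdsWithin (Ico_mem_nhdsGE_of_mem (hsub' hx)))
    ha (fun x hx => bound x (hsub' hx)) ⟨ht.1, le_rfl⟩

/-- The derivative of `energy` along a solution, written in terms of
`x = ⟪Au',u'⟫/⟪Au,u⟫`, `y = ⟪Au,u⟫^(γ-1) ‖Au‖²` and `δ = ⟪u',Au⟫/⟪Au,u⟫`. -/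
noncomputable def energyRate (p γ ε t x y δ : ℝ) : ℝ :=
  (-2 * (1 + t) ^ (-p) * x - 2 * ε * x * δ + 2 * (γ - 1) * δ * y) * (1 + t) ^ (p + 1)
    + (ε * x + y) * ((p + 1) * (1 + t) ^ p)

section
variable {H : Type*} [NormedAddCommGroup H] [InnerProductSpace ℝ H] {A : H →L[ℝ] H}
  {s : Set ℝ} {t : ℝ}

theorem HasDerivWithinAt.inner_apply_self {u : ℝ → H} {v : H} (hA : (A : H →ₗ[ℝ] H).IsSymmetric)
    (hu : HasDerivWithinAt u v s t) :
    HasDerivWithinAt (fun r => ⟪A (u r), u r⟫) (2 * ⟪A (u t), v⟫) s t := by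
  refine ((A.hasFDerivAt.comp_hasDerivWithinAt t hu).inner ℝ hu).congr_deriv ?_
  have hsym : ⟪A v, u t⟫ = ⟪v, A (u t)⟫ := hA v (u t)
  rw [Function.comp_apply, hsym, real_inner_comm v]
  ring

noncomputable def energy (A : H →L[ℝ] H) (p γ ε : ℝ) (u u' : ℝ → H) (t : ℝ) : ℝ :=
  (ε * ⟪A (u' t), u' t⟫ / ⟪A (u t), u t⟫ + ⟪A (u t), u t⟫ ^ (γ - 1) * ‖A (u t)‖ ^ 2)
    * (1 + t) ^ (p + 1)

theorem hasDerivWithinAt_energy {p γ ε : ℝ} {u u' : ℝ → H} {v : H}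
    (hA : (A : H →ₗ[ℝ] H).IsSymmetric) (hu : HasDerivWithinAt u (u' t) s t)
    (hu' : HasDerivWithinAt u' v s t) (hc : 0 < ⟪A (u t), u t⟫) (ht : 0 < 1 + t)
    (heq : ε • v + ((1 + t) ^ (-p)) • u' t + (⟪A (u t), u t⟫ ^ γ) • A (u t) = 0) :
    HasDerivWithinAt (energy A p γ ε u u')
      (energyRate p γ ε t (⟪A (u' t), u' t⟫ / ⟪A (u t), u t⟫)
        (⟪A (u t), u t⟫ ^ (γ - 1) * ‖A (u t)‖ ^ 2) (⟪u' t, A (u t)⟫ / ⟪A (u t), u t⟫)) s t := by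
  have hc' := hu.inner_apply_self hA
  have hb' := (A.hasFDerivAt.comp_hasDerivWithinAt t hu).norm_sq
  have hE := (((hu'.inner_apply_self hA).const_mul ε).div hc' hc.ne').add
    ((hc'.rpow_const (p := γ - 1) (Or.inl hc.ne')).mul hb')
  have hQ : HasDerivWithinAt (fun r => (1 + r) ^ (p + 1)) ((p + 1) * (1 + t) ^ p) s t := by
    simpa using ((hasDerivWithinAt_id t s).const_add 1).rpow_const (p := p + 1) (Or.inl ht.ne')
  refine (hE.mul hQ).congr_deriv ?_
  -- with this, the terms `± 2 ⟪Au,u⟫^(γ-1) ⟪Au,Au'⟫` of the derivative cancel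
  have hv : ε * ⟪A (u' t), v⟫ = -((1 + t) ^ (-p) * ⟪A (u' t), u' t⟫)
      - ⟪A (u t), u t⟫ ^ γ * ⟪A (u' t), A (u t)⟫ := by
    have := congrArg (⟪A (u' t), ·⟫) heq
    simp only [inner_add_right, real_inner_smul_right, inner_zero_right] at this
    linarith
  have hγ : ⟪A (u t), u t⟫ ^ γ = ⟪A (u t), u t⟫ ^ (γ - 1) * ⟪A (u t), u t⟫ := by
    rw [← rpow_add_one hc.ne']; ring_nf
  have hγ' : ⟪A (u t), u t⟫ ^ (γ - 1 - 1) = ⟪A (u t), u t⟫ ^ (γ - 1) / ⟪A (u t), u t⟫ := by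
    rw [rpow_sub_one hc.ne']
  simp only [Function.comp_apply, Pi.add_apply, Pi.mul_apply, Pi.div_apply, energyRate]
  rw [hγ', real_inner_comm (A (u t)) (u' t)]
  rw [hγ, real_inner_comm (A (u t)) (A (u' t))] at hv
  field_simp
  linear_combination (2 * (1 + t) ^ (p + 1) * ⟪A (u t), u t⟫) * hv
end

theorem le_of_le_mul_rpow_neg_of_two_mul_le {s p ε x y K : ℝ} (hs : 0 < s)
    (hy : y ≤ K * s ^ (-p)) (hE : 2 * K ≤ (ε * x + y) * s ^ p) : y ≤ ε * x := by
  have hsp : 0 < s ^ p := rpow_pos_of_pos hs p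
  have hyK : y * s ^ p ≤ K := by
    calc y * s ^ p ≤ K * s ^ (-p) * s ^ p := by gcongr
      _ = K := by rw [rpow_neg hs.le, inv_mul_cancel_right₀ hsp.ne']
  nlinarith

theorem energyRate_nonpos {p γ ε t x y δ K₀ : ℝ} (hp0 : 0 ≤ p) (hp1 : p ≤ 1) (hγ : 1 ≤ γ)
    (hε : 0 ≤ ε) (hεK : ε * (K₀ * γ + p + 1) ≤ 1) (ht : 0 ≤ t) (hx : 0 ≤ x) (hy0 : 0 ≤ y)
    (hyx : y ≤ ε * x) (hδ : |δ| ≤ K₀ / (1 + t)) :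
    energyRate p γ ε t x y δ ≤ 0 := by
  set s := 1 + t
  have hs0 : 0 < s := by linarith
  set q := s ^ p
  have hq : 0 < q := by positivity
  have hqs : q ≤ s := by simpa using rpow_le_rpow_of_exponent_le (by linarith : 1 ≤ s) hp1
  have hrate : energyRate p γ ε t x y δ = -2 * x * s - 2 * ε * x * (δ * s) * q
      + 2 * (γ - 1) * (δ * s) * y * q + (p + 1) * (ε * x + y) * q := by
    have hsp : s ^ (-p) * (q * s) = s := by
      rw [rpow_neg hs0.le, inv_mul_cancel_left₀ hq.ne']
    simp only [energyRate]
    rw [rpow_add_one hs0.ne' p]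
    linear_combination (-2 * x) * hsp
  have hδs : |δ * s| ≤ K₀ := by
    rw [abs_mul, abs_of_pos hs0]; exact (le_div_iff₀ hs0).1 hδ
  have hK₀ : 0 ≤ K₀ := (abs_nonneg _).trans hδs
  obtain ⟨hδl, hδu⟩ := abs_le.1 hδs
  have hεxq : 0 ≤ ε * x * q := by positivity
  have hγ1 : 0 ≤ γ - 1 := sub_nonneg.2 hγ
  rw [hrate]
  nlinarith [mul_nonneg (neg_le_iff_add_nonneg.1 hδl) hεxq,
    mul_nonneg (mul_nonneg (sub_nonneg.2 hδu) hγ1) (mul_nonneg hy0 hq.le),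
    mul_nonneg (mul_nonneg (sub_nonneg.2 hyx) (mul_nonneg hγ1 hK₀)) hq.le,
    mul_nonneg (mul_nonneg (sub_nonneg.2 hyx) (by linarith : (0:ℝ) ≤ p + 1)) hq.le,
    mul_nonneg hx (sub_nonneg.2 hqs), mul_nonneg (mul_nonneg hx hq.le) (sub_nonneg.2 hεK)]

theorem apriori_H_estimate_general
    {H : Type*} [NormedAddCommGroup H] [InnerProductSpace ℝ H]
    (A : H →L[ℝ] H)
    (hA_sa : ∀ x y : H, ⟪A x, y⟫ = ⟪x, A y⟫)
    (hA_nn : ∀ x : H, 0 ≤ ⟪A x, x⟫)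
    (p γ : ℝ) (hp0 : 0 ≤ p) (hp1 : p ≤ 1) (hγ : 1 ≤ γ)
    (u₀ u₁ : H)
    (K₀ K₁ : ℝ) (hK₀ : 0 < K₀) (hK₁ : 0 < K₁) :
    ∃ ε₀ > 0, ∃ L > 0, ∀ ε : ℝ, 0 < ε → ε ≤ ε₀ → ∀ S : ℝ, 0 < S →
      ∀ u u' u'' : ℝ → H,
        u 0 = u₀ → u' 0 = u₁ →
        (∀ t ∈ Set.Ico (0:ℝ) S, HasDerivWithinAt u (u' t) (Set.Ico 0 S) t) →
        (∀ t ∈ Set.Ico (0:ℝ) S, HasDerivWithinAt u' (u'' t) (Set.Ico 0 S) t) →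
        ContinuousOn u'' (Set.Ico 0 S) →
        (∀ t ∈ Set.Ico (0:ℝ) S,
          ε • u'' t + ((1+t) ^ (-p)) • u' t + (⟪A (u t), u t⟫ ^ γ) • A (u t) = 0) →
        (∀ t ∈ Set.Ico (0:ℝ) S, 0 < ⟪A (u t), u t⟫) →
        (∀ t ∈ Set.Ico (0:ℝ) S,
          |⟪u' t, A (u t)⟫| / ⟪A (u t), u t⟫ ≤ K₀ / (1+t)) →
        (∀ t ∈ Set.Ico (0:ℝ) S,
          ⟪A (u t), u t⟫ ^ (γ-1) * ‖A (u t)‖ ^ 2 ≤ K₁ * (1+t) ^ (-(p+1))) →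
        ∀ t ∈ Set.Ico (0:ℝ) S,
          (ε * ⟪A (u' t), u' t⟫ / ⟪A (u t), u t⟫ +
            ⟪A (u t), u t⟫ ^ (γ-1) * ‖A (u t)‖ ^ 2) * (1+t) ^ (p+1) ≤ L := by
  have hC : 0 < K₀ * γ + p + 1 := by nlinarith
  refine ⟨1 / (K₀ * γ + p + 1), by positivity,
    max (1 / (K₀ * γ + p + 1) * ⟪A u₁, u₁⟫ / ⟪A u₀, u₀⟫ + ⟪A u₀, u₀⟫ ^ (γ - 1) * ‖A u₀‖ ^ 2)
      (2 * K₁), lt_max_of_lt_right (by positivity), ?_⟩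
  intro ε hε hεε₀ S _ u u' u'' hu0 hu'0 hu hu' _ heq hpos h310 h311
  refine le_of_hasDerivWithinAt_Ico_of_deriv_nonpos (f := energy A p γ ε u u')
    (fun τ hτ => hasDerivWithinAt_energy hA_sa (hu τ hτ) (hu' τ hτ) (hpos τ hτ)
      (by linarith [hτ.1]) (heq τ hτ)) ?_ fun τ hτ hL => ?_
  · rw [energy, hu0, hu'0, add_zero, one_rpow, mul_one]
    refine le_max_of_le_left ?_
    gcongr
    exacts [hA_nn _, hA_nn _]
  · have hc := hpos τ hτ
    refine energyRate_nonpos hp0 hp1 hγ hε.le ((le_div_iff₀ hC).1 hεε₀) hτ.1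
      (div_nonneg (hA_nn _) hc.le) (by positivity) ?_ ?_
    · refine le_of_le_mul_rpow_neg_of_two_mul_le (by linarith [hτ.1]) (h311 τ hτ) ?_
      exact (le_max_right _ _).trans (by simpa only [energy, mul_div_assoc] using hL)
    · rw [abs_div, abs_of_pos hc]
      exact h310 τ hτ

/-- A priori estimate (3.15) of Proposition 3.6: under the conditional bounds
(3.10)–(3.11) on `[0,S)`, the energy
`H_ε(t) = [ε ⟨Au',u'⟩/⟨Au,u⟩ + ⟨Au,u⟩^{γ-1}|Au|²](1+t)^{p+1}` is bounded by a
constant `L` independent of `ε`, `S` and `t`, for every `ε` small enough. -/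
theorem apriori_H_estimate
    {H : Type*} [NormedAddCommGroup H] [InnerProductSpace ℝ H]
    (A : H →L[ℝ] H)
    (hA_sa : ∀ x y : H, ⟪A x, y⟫ = ⟪x, A y⟫)
    (hA_nn : ∀ x : H, 0 ≤ ⟪A x, x⟫)
    (p γ : ℝ) (hp0 : 0 ≤ p) (hp1 : p ≤ 1) (hγ : 1 ≤ γ)
    (u₀ u₁ : H) (hmdg : 0 < ⟪A u₀, u₀⟫)
    (K₀ K₁ : ℝ) (hK₀ : 0 < K₀) (hK₁ : 0 < K₁) :
    ∃ ε₀ > 0, ∃ L > 0, ∀ ε : ℝ, 0 < ε → ε ≤ ε₀ → ∀ S : ℝ, 0 < S →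
      ∀ u u' u'' : ℝ → H,
        u 0 = u₀ → u' 0 = u₁ →
        (∀ t ∈ Set.Ico (0:ℝ) S, HasDerivWithinAt u (u' t) (Set.Ico 0 S) t) →
        (∀ t ∈ Set.Ico (0:ℝ) S, HasDerivWithinAt u' (u'' t) (Set.Ico 0 S) t) →
        ContinuousOn u'' (Set.Ico 0 S) →
        (∀ t ∈ Set.Ico (0:ℝ) S,
          ε • u'' t + ((1+t) ^ (-p)) • u' t + (⟪A (u t), u t⟫ ^ γ) • A (u t) = 0) →
        (∀ t ∈ Set.Ico (0:ℝ) S, 0 < ⟪A (u t), u t⟫) →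
        (∀ t ∈ Set.Ico (0:ℝ) S,
          |⟪u' t, A (u t)⟫| / ⟪A (u t), u t⟫ ≤ K₀ / (1+t)) →
        (∀ t ∈ Set.Ico (0:ℝ) S,
          ⟪A (u t), u t⟫ ^ (γ-1) * ‖A (u t)‖ ^ 2 ≤ K₁ * (1+t) ^ (-(p+1))) →
        ∀ t ∈ Set.Ico (0:ℝ) S,
          (ε * ⟪A (u' t), u' t⟫ / ⟪A (u t), u t⟫ +
            ⟪A (u t), u t⟫ ^ (γ-1) * ‖A (u t)‖ ^ 2) * (1+t) ^ (p+1) ≤ L :=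
  apriori_H_estimate_general A hA_sa hA_nn p γ hp0 hp1 hγ u₀ u₁ K₀ K₁ hK₀ hK₁
end

section
/- Let H be a real Hilbert space, let A : H → H be a continuous self-adjoint nonnegative linear operator, and let γ ≥ 1. Then for all x, y ∈ H, writing a := ⟨Ax,x⟩ and b := ⟨Ay,y⟩, one has ( a^γ − b^γ )² ≤ 6 γ² ( a^{γ−1} + b^{γ−1} ) ( a^γ + b^γ ) ⟨A(x−y), x−y⟩. -/
open Real
open scoped RealInnerProductSpace

-- Bernoulli-based step: for 0 ≤ b ≤ a, a^γ - b^γ ≤ γ a^(γ-1) (a-b).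
lemma pde_bernoulli {γ a b : ℝ} (hγ : 1 ≤ γ) (hb : 0 ≤ b) (hba : b ≤ a) :
    a ^ γ - b ^ γ ≤ γ * a ^ (γ - 1) * (a - b) := by
  have ha : 0 ≤ a := hb.trans hba
  rcases eq_or_lt_of_le ha with h0 | hpos
  · have ha0 : a = 0 := h0.symm
    have hb0 : b = 0 := le_antisymm (ha0 ▸ hba) hb
    simp [ha0, hb0]
  · have hs : (-1 : ℝ) ≤ b / a - 1 := by
      have : 0 ≤ b / a := div_nonneg hb ha
      linarith
    have hBer := one_add_mul_self_le_rpow_one_add hs hγ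
    have h1 : (1 + (b / a - 1)) = b / a := by ring
    rw [h1, div_rpow hb ha] at hBer
    have haγ : 0 < a ^ γ := rpow_pos_of_pos hpos γ
    have h2 : (1 + γ * (b / a - 1)) * a ^ γ ≤ b ^ γ :=
      (le_div_iff₀ haγ).mp hBer
    have h3 : a ^ (γ - 1) * a = a ^ γ := by
      rw [← rpow_add_one (ne_of_gt hpos)]; ring_nf
    have h4 : a ^ (γ - 1) * b ≤ a ^ (γ - 1) * a := by
      exact mul_le_mul_of_nonneg_left hba (rpow_nonneg ha _)
    have key : (1 + γ * (b / a - 1)) * a ^ γ = a ^ γ + γ * (a ^ (γ - 1) * b - a ^ γ) := by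
      field_simp
      rw [← h3]; ring
    rw [key] at h2
    nlinarith [h2, h3]

lemma pde_aux_ordered {γ a b c : ℝ} (hγ : 1 ≤ γ) (hb : 0 ≤ b) (hba : b ≤ a)
    (hc : 0 ≤ c) (h : (Real.sqrt a - Real.sqrt b) ^ 2 ≤ c) :
    (a ^ γ - b ^ γ) ^ 2 ≤ 6 * γ ^ 2 * (a ^ (γ-1) + b ^ (γ-1)) * (a ^ γ + b ^ γ) * c := by
  have ha : 0 ≤ a := hb.trans hba
  have hB := pde_bernoulli hγ hb hba
  have hrpow_nn : ∀ t : ℝ, 0 ≤ a ^ t := fun t => rpow_nonneg ha t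
  have hbnn : ∀ t : ℝ, 0 ≤ b ^ t := fun t => rpow_nonneg hb t
  have hmono : b ^ γ ≤ a ^ γ := rpow_le_rpow hb hba (le_trans zero_le_one hγ)
  have hnum : 0 ≤ a ^ γ - b ^ γ := by linarith
  -- (a - b)^2 ≤ 4 a c
  have hsa : Real.sqrt a ^ 2 = a := Real.sq_sqrt ha
  have hsb : Real.sqrt b ^ 2 = b := Real.sq_sqrt hb
  have hsba : Real.sqrt b ≤ Real.sqrt a := Real.sqrt_le_sqrt hba
  have hsb0 : 0 ≤ Real.sqrt b := Real.sqrt_nonneg b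
  have hsum : (Real.sqrt a + Real.sqrt b) ^ 2 ≤ 4 * a := by nlinarith
  have hab2 : (a - b) ^ 2 ≤ 4 * a * c := by
    have : (a - b) ^ 2 = (Real.sqrt a - Real.sqrt b) ^ 2 * (Real.sqrt a + Real.sqrt b) ^ 2 := by
      nlinarith [hsa, hsb]
    rw [this]
    calc (Real.sqrt a - Real.sqrt b) ^ 2 * (Real.sqrt a + Real.sqrt b) ^ 2
        ≤ c * (4 * a) := mul_le_mul h hsum (sq_nonneg _) hc
      _ = 4 * a * c := by ring
  -- main chain
  have h1 : (a ^ γ - b ^ γ) ^ 2 ≤ (γ * a ^ (γ - 1)) ^ 2 * (a - b) ^ 2 := by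
    have := mul_self_le_mul_self hnum hB
    calc (a ^ γ - b ^ γ) ^ 2 = (a ^ γ - b ^ γ) * (a ^ γ - b ^ γ) := sq (a ^ γ - b ^ γ) ▸ by ring
      _ ≤ (γ * a ^ (γ - 1) * (a - b)) * (γ * a ^ (γ - 1) * (a - b)) := this
      _ = (γ * a ^ (γ - 1)) ^ 2 * (a - b) ^ 2 := by ring
  have hγ0 : (0:ℝ) ≤ γ := le_trans zero_le_one hγ
  have h2 : (γ * a ^ (γ - 1)) ^ 2 * (a - b) ^ 2 ≤ (γ * a ^ (γ - 1)) ^ 2 * (4 * a * c) :=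
    mul_le_mul_of_nonneg_left hab2 (sq_nonneg _)
  have h3 : a ^ (γ - 1) * a = a ^ γ := by
    rcases eq_or_lt_of_le ha with h0 | hpos
    · have ha0 : a = 0 := h0.symm
      have : γ ≠ 0 := by linarith
      simp [ha0, Real.zero_rpow this]
    · rw [← rpow_add_one (ne_of_gt hpos)]; ring_nf
  have h4 : (γ * a ^ (γ - 1)) ^ 2 * (4 * a * c) = 4 * γ ^ 2 * a ^ (γ - 1) * a ^ γ * c := by
    rw [← h3]; ring
  have h5 : 4 * γ ^ 2 * a ^ (γ - 1) * a ^ γ * c ≤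
      6 * γ ^ 2 * (a ^ (γ-1) + b ^ (γ-1)) * (a ^ γ + b ^ γ) * c := by
    have hg2 : 0 ≤ γ ^ 2 := sq_nonneg γ
    nlinarith [mul_nonneg (mul_nonneg hg2 (hrpow_nn (γ-1))) (mul_nonneg (hbnn γ) hc),
      mul_nonneg (mul_nonneg hg2 (hbnn (γ-1))) (mul_nonneg (hrpow_nn γ) hc),
      mul_nonneg (mul_nonneg hg2 (hbnn (γ-1))) (mul_nonneg (hbnn γ) hc),
      mul_nonneg (mul_nonneg hg2 (hrpow_nn (γ-1))) (mul_nonneg (hrpow_nn γ) hc)]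
  linarith [h1, h2, h4 ▸ h2]

lemma pde_aux {γ a b c : ℝ} (hγ : 1 ≤ γ) (ha : 0 ≤ a) (hb : 0 ≤ b)
    (hc : 0 ≤ c) (h : (Real.sqrt a - Real.sqrt b) ^ 2 ≤ c) :
    (a ^ γ - b ^ γ) ^ 2 ≤ 6 * γ ^ 2 * (a ^ (γ-1) + b ^ (γ-1)) * (a ^ γ + b ^ γ) * c := by
  rcases le_total b a with hba | hab
  · exact pde_aux_ordered hγ hb hba hc h
  · have h' : (Real.sqrt b - Real.sqrt a) ^ 2 ≤ c := by
      have : (Real.sqrt b - Real.sqrt a) ^ 2 = (Real.sqrt a - Real.sqrt b) ^ 2 := by ring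
      linarith [this ▸ h]
    have := pde_aux_ordered hγ ha hab hc h'
    calc (a ^ γ - b ^ γ) ^ 2 = (b ^ γ - a ^ γ) ^ 2 := by ring
      _ ≤ 6 * γ ^ 2 * (b ^ (γ-1) + a ^ (γ-1)) * (b ^ γ + a ^ γ) * c := this
      _ = 6 * γ ^ 2 * (a ^ (γ-1) + b ^ (γ-1)) * (a ^ γ + b ^ γ) * c := by ring

-- Cauchy–Schwarz for the semidefinite form
lemma pde_cs {H : Type*} [NormedAddCommGroup H] [InnerProductSpace ℝ H]
    (A : H →L[ℝ] H)
    (hA_sa : ∀ x y : H, ⟪A x, y⟫ = ⟪x, A y⟫)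
    (hA_nn : ∀ x : H, 0 ≤ ⟪A x, x⟫) (u v : H) :
    ⟪A u, v⟫ ^ 2 ≤ ⟪A u, u⟫ * ⟪A v, v⟫ := by
  have key : ∀ t : ℝ, 0 ≤ ⟪A v, v⟫ * (t * t) + (2 * ⟪A u, v⟫) * t + ⟪A u, u⟫ := by
    intro t
    have h := hA_nn (u + t • v)
    have hs : ⟪A v, u⟫ = ⟪A u, v⟫ := by
      rw [hA_sa v u, real_inner_comm]
    simp only [map_add, map_smul, inner_add_left, inner_add_right, inner_smul_left,
      inner_smul_right, RCLike.ofReal_real_eq_id, id_eq, starRingEnd_apply, star_trivial] at h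
    rw [hs] at h
    ring_nf at h ⊢
    linarith [h]
  have hd := discrim_le_zero key
  rw [discrim] at hd
  nlinarith [hd]

/-- Estimate (3.31): for `γ ≥ 1` and `A` self-adjoint nonnegative, setting
`a = ⟨Ax,x⟩`, `b = ⟨Ay,y⟩`, one has
`(a^γ - b^γ)² ≤ 6γ² (a^{γ-1} + b^{γ-1}) (a^γ + b^γ) ⟨A(x-y), x-y⟩`. -/
theorem power_difference_estimate
    {H : Type*} [NormedAddCommGroup H] [InnerProductSpace ℝ H]
    (A : H →L[ℝ] H)
    (hA_sa : ∀ x y : H, ⟪A x, y⟫ = ⟪x, A y⟫)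
    (hA_nn : ∀ x : H, 0 ≤ ⟪A x, x⟫)
    (γ : ℝ) (hγ : 1 ≤ γ) (x y : H) :
    (⟪A x, x⟫ ^ γ - ⟪A y, y⟫ ^ γ) ^ 2 ≤
      6 * γ ^ 2 * (⟪A x, x⟫ ^ (γ-1) + ⟪A y, y⟫ ^ (γ-1)) *
        (⟪A x, x⟫ ^ γ + ⟪A y, y⟫ ^ γ) * ⟪A (x - y), x - y⟫ := by
  set a := ⟪A x, x⟫ with ha_def
  set b := ⟪A y, y⟫ with hb_def
  set c := ⟪A (x - y), x - y⟫ with hc_def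
  have ha : 0 ≤ a := hA_nn x
  have hb : 0 ≤ b := hA_nn y
  have hc : 0 ≤ c := hA_nn (x - y)
  set t := ⟪A y, x - y⟫ with ht_def
  have hexp : a = b + 2 * t + c := by
    have hs : ⟪A (x - y), y⟫ = t := by rw [hA_sa (x - y) y, real_inner_comm]
    have hx : x = y + (x - y) := by abel
    calc a = ⟪A (y + (x - y)), y + (x - y)⟫ := by rw [← hx]
      _ = b + 2 * t + c := by
          simp only [map_add, inner_add_left, inner_add_right]
          rw [hs]; ring
  have hcs : t ^ 2 ≤ b * c := pde_cs A hA_sa hA_nn y (x - y)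
  apply pde_aux hγ ha hb hc
  -- show (√a - √b)^2 ≤ c
  have hsa : Real.sqrt a ^ 2 = a := Real.sq_sqrt ha
  have hsb : Real.sqrt b ^ 2 = b := Real.sq_sqrt hb
  have hsa0 : 0 ≤ Real.sqrt a := Real.sqrt_nonneg a
  have hsb0 : 0 ≤ Real.sqrt b := Real.sqrt_nonneg b
  -- key: √a √b ≥ b + t
  have hkey : b + t ≤ Real.sqrt a * Real.sqrt b := by
    rcases le_or_gt (b + t) 0 with hle | hpos
    · exact hle.trans (mul_nonneg hsa0 hsb0)
    · have hsq : (b + t) ^ 2 ≤ (Real.sqrt a * Real.sqrt b) ^ 2 := by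
        have : (Real.sqrt a * Real.sqrt b) ^ 2 = a * b := by
          rw [mul_pow, hsa, hsb]
        rw [this]
        nlinarith [hcs, hexp, hb]
      nlinarith [hsq, mul_nonneg hsa0 hsb0, hpos]
  nlinarith [hexp, hkey, hsa, hsb]
end
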